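/- For complex q, z with |q| < 1 and |zq| < 1, Andrews' bivariate mock theta function ν(z;q) := Σ_{n≥0} q^{n²+n} / (−zq; q²)_{n+1} equals Σ_{n≥0} (q/z; q²)_n (−zq)ⁿ, for z ≠ 0. -/

import Mathlib

open scoped BigOperators

/-- Finite q-Pochhammer symbol `(a; q)_n`. -/
noncomputable def qPoch (a q : ℂ) (n : ℕ) : ℂ :=
  ∏ k ∈ Finset.range n, (1 - a * q ^ k)

/-- Infinite q-Pochhammer symbol `(a; q)_∞`. -/
noncomputable def qPochInf (a q : ℂ) : ℂ :=
  ∏' k : ℕ, (1 - a * q ^ k)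

/-!
Write `S(t) = ∑ₙ (a; Q)ₙ tⁿ`. Splitting off the last factor of `(a; Q)ₙ₊₁` gives the
functional equation `(1 - t) S(t) = 1 - a t S(tQ)`, and iterating it `J` times writes `S(t)`
as the `J`-th partial sum of `∑ⱼ (-at)ʲ Q^(j choose 2) / (t; Q)ⱼ₊₁` plus a remainder that the
factor `Q^(J choose 2)` drives to zero. For `a = q/z`, `t = -zq`, `Q = q²` one has `-at = q²`,
and the `j`-th term becomes `q^(j² + j) / (-zq; q²)ⱼ₊₁`.
-/

open Filter Topology

lemma qPoch_succ (a q : ℂ) (n : ℕ) : qPoch a q (n + 1) = qPoch a q n * (1 - a * q ^ n) :=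
  Finset.prod_range_succ _ n

lemma norm_mul_pow_le {q : ℂ} (hq : ‖q‖ ≤ 1) (t : ℂ) (k : ℕ) : ‖t * q ^ k‖ ≤ ‖t‖ := by
  rw [norm_mul, norm_pow]
  exact mul_le_of_le_one_right (norm_nonneg t) (pow_le_one₀ (norm_nonneg q) hq)

lemma one_sub_norm_le_norm_one_sub_mul_pow {q : ℂ} (hq : ‖q‖ ≤ 1) (t : ℂ) (k : ℕ) :
    1 - ‖t‖ ≤ ‖1 - t * q ^ k‖ :=
  calc 1 - ‖t‖ ≤ 1 - ‖t * q ^ k‖ := by gcongr; exact norm_mul_pow_le hq t k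
    _ ≤ ‖1 - t * q ^ k‖ := by simpa using norm_sub_norm_le (1 : ℂ) (t * q ^ k)

lemma one_sub_mul_pow_ne_zero {q t : ℂ} (hq : ‖q‖ ≤ 1) (ht : ‖t‖ < 1) (k : ℕ) :
    1 - t * q ^ k ≠ 0 :=
  norm_pos_iff.mp ((sub_pos.mpr ht).trans_le (one_sub_norm_le_norm_one_sub_mul_pow hq t k))

lemma qPoch_ne_zero {a q : ℂ} (ha : ‖a‖ < 1) (hq : ‖q‖ ≤ 1) (n : ℕ) : qPoch a q n ≠ 0 :=
  Finset.prod_ne_zero_iff.mpr fun k _ ↦ one_sub_mul_pow_ne_zero hq ha k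

lemma norm_qPoch_le (a : ℂ) {q : ℂ} (hq : ‖q‖ < 1) (n : ℕ) :
    ‖qPoch a q n‖ ≤ Real.exp (‖a‖ / (1 - ‖q‖)) := by
  have hsum : ∑ k ∈ Finset.range n, ‖-(a * q ^ k)‖ ≤ ‖a‖ / (1 - ‖q‖) := by
    simp_rw [norm_neg, norm_mul, norm_pow, ← Finset.mul_sum]
    rw [div_eq_mul_one_div]
    gcongr
    simpa only [Finset.range_eq_Ico, pow_zero] using
      geom_sum_Ico_le_of_lt_one (m := 0) (n := n) (norm_nonneg q) hq
  have hprod : ‖qPoch a q n - 1‖ ≤ Real.exp (∑ k ∈ Finset.range n, ‖-(a * q ^ k)‖) - 1 := by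
    simpa only [qPoch, ← sub_eq_add_neg] using
      Finset.norm_prod_one_add_sub_one_le (Finset.range n) fun k ↦ -(a * q ^ k)
  calc ‖qPoch a q n‖ ≤ ‖qPoch a q n - 1‖ + 1 := by
        simpa using norm_le_norm_sub_add (qPoch a q n) 1
    _ ≤ Real.exp (∑ k ∈ Finset.range n, ‖-(a * q ^ k)‖) := by linarith
    _ ≤ Real.exp (‖a‖ / (1 - ‖q‖)) := Real.exp_le_exp.mpr hsum

lemma pow_succ_mul_pow_choose_two (x q : ℂ) (j : ℕ) :
    x ^ (j + 1) * q ^ (j + 1).choose 2 = x ^ j * q ^ j.choose 2 * (x * q ^ j) := by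
  rw [Nat.choose_succ_succ', Nat.choose_one_right, pow_add]
  ring

noncomputable def qPochSeries (a q t : ℂ) : ℂ := ∑' n, qPoch a q n * t ^ n

noncomputable def invQPochTerm (a q t : ℂ) (j : ℕ) : ℂ :=
  (-(a * t)) ^ j * q ^ j.choose 2 / qPoch t q (j + 1)

section qPochSeries

variable (a : ℂ) {q t : ℂ}

lemma summable_qPoch_mul_pow (hq : ‖q‖ < 1) (ht : ‖t‖ < 1) :
    Summable fun n ↦ qPoch a q n * t ^ n :=
  .of_norm_bounded ((summable_geometric_of_lt_one (norm_nonneg t) ht).mul_left _) fun n ↦ by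
    rw [norm_mul, norm_pow]
    exact mul_le_mul_of_nonneg_right (norm_qPoch_le a hq n) (by positivity)

lemma norm_qPochSeries_le (hq : ‖q‖ < 1) (ht : ‖t‖ < 1) :
    ‖qPochSeries a q t‖ ≤ Real.exp (‖a‖ / (1 - ‖q‖)) / (1 - ‖t‖) := by
  rw [div_eq_mul_inv]
  refine tsum_of_norm_bounded ((hasSum_geometric_of_lt_one (norm_nonneg t) ht).mul_left _) ?_
  intro n
  rw [norm_mul, norm_pow]
  exact mul_le_mul_of_nonneg_right (norm_qPoch_le a hq n) (by positivity)

lemma one_sub_mul_qPochSeries (hq : ‖q‖ < 1) (ht : ‖t‖ < 1) :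
    (1 - t) * qPochSeries a q t = 1 - a * t * qPochSeries a q (t * q) := by
  have hS := summable_qPoch_mul_pow a hq ht
  have hSq := summable_qPoch_mul_pow a (t := t * q) hq
    (by simpa using (norm_mul_pow_le hq.le t 1).trans_lt ht)
  have hshift : ∑' n, qPoch a q (n + 1) * t ^ (n + 1)
      = t * qPochSeries a q t - a * t * qPochSeries a q (t * q) := by
    rw [qPochSeries, qPochSeries, ← tsum_mul_left, ← tsum_mul_left,
      ← (hS.mul_left t).tsum_sub (hSq.mul_left (a * t))]
    congr 1 with n
    rw [qPoch_succ]
    ring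
  have hsplit : qPochSeries a q t
      = 1 + (t * qPochSeries a q t - a * t * qPochSeries a q (t * q)) := by
    rw [← hshift, qPochSeries, hS.tsum_eq_zero_add]
    simp [qPoch]
  linear_combination hsplit

lemma qPochSeries_eq_sum_add (hq : ‖q‖ < 1) (ht : ‖t‖ < 1) (J : ℕ) :
    qPochSeries a q t = ∑ j ∈ Finset.range J, invQPochTerm a q t j
      + invQPochTerm a q t J * (1 - t * q ^ J) * qPochSeries a q (t * q ^ J) := by
  induction J with
  | zero =>
    have h1 : 1 - t ≠ 0 := by simpa using one_sub_mul_pow_ne_zero hq.le ht 0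
    simp [invQPochTerm, qPoch, h1]
  | succ J ih =>
    have hP := qPoch_ne_zero ht hq.le J
    have h1 := one_sub_mul_pow_ne_zero hq.le ht J
    have h2 := one_sub_mul_pow_ne_zero hq.le ht (J + 1)
    have hrec := one_sub_mul_qPochSeries a hq ((norm_mul_pow_le hq.le t J).trans_lt ht)
    rw [mul_assoc t, ← pow_succ] at hrec
    rw [ih, Finset.sum_range_succ, add_assoc]
    congr 1
    simp only [invQPochTerm, qPoch_succ, pow_succ_mul_pow_choose_two]
    field_simp
    linear_combination (-(a * t)) ^ J * q ^ J.choose 2 * hrec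

lemma norm_invQPochTerm_succ_le (hq : ‖q‖ < 1) (ht : ‖t‖ < 1) (j : ℕ) :
    ‖invQPochTerm a q t (j + 1)‖ ≤ ‖a * t‖ * ‖q‖ ^ j / (1 - ‖t‖) * ‖invQPochTerm a q t j‖ := by
  have hfactor := one_sub_norm_le_norm_one_sub_mul_pow hq.le t (j + 1)
  rw [invQPochTerm, invQPochTerm, pow_succ_mul_pow_choose_two, qPoch_succ (n := j + 1),
    mul_div_mul_comm, norm_mul, mul_comm]
  gcongr
  rw [norm_div, norm_mul, norm_neg, norm_pow]
  gcongr

lemma summable_invQPochTerm (hq : ‖q‖ < 1) (ht : ‖t‖ < 1) : Summable (invQPochTerm a q t) := by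
  have hratio : Tendsto (fun j ↦ ‖a * t‖ * ‖q‖ ^ j / (1 - ‖t‖)) atTop (𝓝 0) := by
    simpa using ((tendsto_pow_atTop_nhds_zero_of_lt_one (norm_nonneg q) hq).const_mul
      ‖a * t‖).div_const (1 - ‖t‖)
  refine summable_of_ratio_norm_eventually_le (r := 1 / 2) (by norm_num) ?_
  filter_upwards [hratio.eventually_le_const (by norm_num : (0 : ℝ) < 1 / 2)] with j hj
  exact (norm_invQPochTerm_succ_le a hq ht j).trans (by gcongr)

lemma hasSum_invQPochTerm (hq : ‖q‖ < 1) (ht : ‖t‖ < 1) :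
    HasSum (invQPochTerm a q t) (qPochSeries a q t) := by
  set B := Real.exp (‖a‖ / (1 - ‖q‖)) / (1 - ‖t‖)
  have hsum := summable_invQPochTerm a hq ht
  have hrem (J : ℕ) : ‖invQPochTerm a q t J * (1 - t * q ^ J) * qPochSeries a q (t * q ^ J)‖
      ≤ ‖invQPochTerm a q t J‖ * (2 * B) := by
    have htJ := norm_mul_pow_le hq.le t J
    have hfactor : ‖1 - t * q ^ J‖ ≤ 2 := by
      linarith [norm_sub_le (1 : ℂ) (t * q ^ J), norm_one (α := ℂ)]
    have hS : ‖qPochSeries a q (t * q ^ J)‖ ≤ B :=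
      (norm_qPochSeries_le a hq (htJ.trans_lt ht)).trans (by simp only [B]; gcongr)
    rw [norm_mul, norm_mul, mul_assoc]
    gcongr
  have hlim : Tendsto (fun J ↦ invQPochTerm a q t J * (1 - t * q ^ J)
      * qPochSeries a q (t * q ^ J)) atTop (𝓝 0) :=
    squeeze_zero_norm hrem (by simpa using hsum.tendsto_atTop_zero.norm.mul_const (2 * B))
  rw [hsum.hasSum_iff_tendsto_nat]
  simpa [sub_eq_iff_eq_add.mpr (qPochSeries_eq_sum_add a hq ht _)]
    using (tendsto_const_nhds (x := qPochSeries a q t)).sub hlim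

end qPochSeries

lemma sq_pow_mul_sq_pow_choose_two (q : ℂ) (j : ℕ) :
    (q ^ 2) ^ j * (q ^ 2) ^ j.choose 2 = q ^ (j ^ 2 + j) := by
  induction j with
  | zero => simp
  | succ j ih =>
    rw [pow_succ_mul_pow_choose_two, ih]
    ring

theorem andrews_nu (q z : ℂ) (hq : ‖q‖ < 1) (hz : z ≠ 0) (hzq : ‖z * q‖ < 1) :
    ∑' n : ℕ, q ^ (n ^ 2 + n) / qPoch (-(z * q)) (q ^ 2) (n + 1)
      = ∑' n : ℕ, qPoch (q / z) (q ^ 2) n * (-(z * q)) ^ n := by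
  have hq2 : ‖q ^ 2‖ < 1 := by simpa using pow_lt_one₀ (norm_nonneg q) hq two_ne_zero
  have ht : ‖-(z * q)‖ < 1 := by rwa [norm_neg]
  have hterm (n : ℕ) : invQPochTerm (q / z) (q ^ 2) (-(z * q)) n
      = q ^ (n ^ 2 + n) / qPoch (-(z * q)) (q ^ 2) (n + 1) := by
    have hx : -(q / z * -(z * q)) = q ^ 2 := by field_simp
    rw [invQPochTerm, hx, sq_pow_mul_sq_pow_choose_two]
  simp_rw [← hterm]
  exact (hasSum_invQPochTerm (q / z) hq2 ht).tsum_eq
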